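/- arXiv:1202.3871 — 3 statements merged into one kernel-verified Lean document; each statement's English description precedes it below -/
import Mathlib

section
/- Let f ∈ ℚ[[x]] be a formal power series with zero constant coefficient satisfying the functional equation (f − x·f′) ∘ (x·e^x) = e^x − x·e^x − 1, where ∘ denotes substitution of the power series x·e^x (which has zero constant term) into f − x·f′, f′ is the formal derivative of f, and e^x = exp(x) is the formal exponential series. Then for every n ≥ 2, the coefficient of x^n in f equals (−1)^n (n−1)^{n−2} / n!. -/
/-!
Let `W` be the Lambert series, the compositional inverse of `x eˣ`. The series `exp ∘ W` has
coefficients `(1 - k)^(k-1) / k!`, and `(exp ∘ W) ∘ (x eˣ) = eˣ` is, coefficientwise, Abel's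
identity `∑ₖ C(n,k) (1 - k)^(k-1) (y + k)^(n-k) = (y + 1)ⁿ` at `y = 0`. Hence
`exp ∘ W - 1 - x` solves the functional equation, and since substituting `x eˣ` is injective (its
coefficient matrix is unitriangular), `f - x f' = exp ∘ W - 1 - x`. Comparing coefficients gives
`(1 - n) aₙ = (1 - n)^(n-1) / n!`.
-/

/-- Substitution of the power series `g` (with zero constant coefficient) into `f`. -/
noncomputable def psubst (g f : PowerSeries ℚ) : PowerSeries ℚ :=
  PowerSeries.mk fun n =>
    ∑ k ∈ Finset.range (n + 1), PowerSeries.coeff k f * PowerSeries.coeff n (g ^ k)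

open Finset

section Abel

open Polynomial

/-- Abel's sum `∑ₖ C(n,k) x (x - k)^(k-1) (y + k)^(n-k)` at `x = 1`, as a polynomial in `y`; at
`k = 0` the truncated exponent gives `1^0`, which is Abel's `x (x - 0)^(-1) = 1`. -/
noncomputable def abelPoly (n : ℕ) : ℚ[X] :=
  ∑ k ∈ range (n + 1), C (n.choose k * (1 - k : ℚ) ^ (k - 1)) * (X + C (k : ℚ)) ^ (n - k)

theorem derivative_abelPoly_succ (n : ℕ) :
    derivative (abelPoly (n + 1)) = C ((n : ℚ) + 1) * abelPoly n := by
  rw [abelPoly, abelPoly, sum_range_succ, Nat.sub_self, pow_zero, mul_one, derivative_add,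
    derivative_C, add_zero, derivative_sum, mul_sum]
  refine sum_congr rfl fun k _ => ?_
  have hchoose : ((n + 1).choose k * (n + 1 - k : ℕ) : ℚ) = (n + 1) * n.choose k := by
    exact_mod_cast (Nat.choose_mul_succ_eq n k).symm.trans (mul_comm _ _)
  rw [derivative_C_mul, derivative_pow, derivative_add, derivative_X, derivative_C, add_zero,
    mul_one, show n + 1 - k - 1 = n - k by omega, ← mul_assoc, ← C_mul, ← mul_assoc, ← C_mul]
  congr 2
  linear_combination (1 - k : ℚ) ^ (k - 1) * hchoose

theorem sum_neg_one_pow_mul_choose_mul_pow_eq_zero {R : Type*} [CommRing R] {n j : ℕ} (h : j < n)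
    (y : R) : ∑ k ∈ range (n + 1), (-1 : R) ^ (n - k) * n.choose k * (y + k) ^ j = 0 := by
  have := congrFun (fwdDiff_iter_pow_eq_zero_of_lt (R := R) h) y
  rw [fwdDiff_iter_eq_sum_shift] at this
  simpa [zsmul_eq_mul] using this

/-- Up to sign, this is the `n`-th forward difference of `y ↦ y^(n-1)` at `-1`. -/
theorem abelPoly_eval_neg_one {n : ℕ} (hn : 1 ≤ n) : (abelPoly n).eval (-1) = 0 := by
  have hterm : ∀ k ∈ range (n + 1), n.choose k * (1 - k : ℚ) ^ (k - 1) * (-1 + k) ^ (n - k) =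
      (-1) ^ (n - 1) * ((-1) ^ (n - k) * n.choose k * (-1 + k) ^ (n - 1)) := by
    have hs (m : ℕ) : (-1 : ℚ) ^ m * (-1) ^ m = 1 := by rw [← mul_pow]; norm_num
    intro k hk
    obtain ⟨m, rfl⟩ := Nat.exists_eq_add_of_le (Nat.lt_succ_iff.mp (mem_range.mp hk))
    rcases k with _ | j
    · rcases m with _ | m
      · omega
      simp only [zero_add, Nat.add_sub_cancel, Nat.sub_zero, Nat.cast_zero, zero_tsub, pow_zero]
      linear_combination -(-1 : ℚ) ^ (m + 1) * (m + 1).choose 0 * hs m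
    · simp only [Nat.add_sub_cancel, Nat.add_sub_cancel_left, show j + 1 + m - 1 = j + m by omega]
      push_cast
      rw [show (1 - ((j : ℚ) + 1)) = -1 * j by ring, show -1 + ((j : ℚ) + 1) = j by ring]
      linear_combination -(-1 : ℚ) ^ j * ((j + 1 + m).choose (j + 1) * (j : ℚ) ^ (j + m)) * hs m
  rw [abelPoly, eval_finsetSum]
  simp only [eval_mul, eval_C, eval_pow, eval_add, eval_X]
  rw [sum_congr rfl hterm, ← mul_sum,
    sum_neg_one_pow_mul_choose_mul_pow_eq_zero (by omega : n - 1 < n), mul_zero]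

theorem abelPoly_eq (n : ℕ) : abelPoly n = (X + 1) ^ n := by
  induction n with
  | zero => simp [abelPoly]
  | succ n ih =>
    have hderiv : derivative (abelPoly (n + 1) - (X + 1) ^ (n + 1)) = 0 := by
      rw [derivative_sub, derivative_abelPoly_succ, ih, derivative_pow, derivative_add,
        derivative_X, derivative_one]
      simp
    have hconst := congrArg (eval (-1)) (eq_C_of_derivative_eq_zero hderiv)
    rw [eval_C] at hconst
    rw [← sub_eq_zero, eq_C_of_derivative_eq_zero hderiv, ← hconst]
    simp [abelPoly_eval_neg_one]

theorem sum_choose_mul_one_sub_pow_mul_pow (n : ℕ) :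
    ∑ k ∈ range (n + 1), n.choose k * (1 - k : ℚ) ^ (k - 1) * (k : ℚ) ^ (n - k) = 1 := by
  simpa [abelPoly, eval_finsetSum] using congrArg (eval 0) (abelPoly_eq n)

end Abel

open PowerSeries

theorem coeff_psubst (g f : ℚ⟦X⟧) (n : ℕ) :
    coeff n (psubst g f) = ∑ k ∈ range (n + 1), coeff k f * coeff n (g ^ k) :=
  coeff_mk _ _

theorem psubst_sub (g f₁ f₂ : ℚ⟦X⟧) : psubst g (f₁ - f₂) = psubst g f₁ - psubst g f₂ := by
  ext n
  simp only [coeff_psubst, map_sub, sub_mul, sum_sub_distrib]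

theorem psubst_one (g : ℚ⟦X⟧) : psubst g 1 = 1 := by
  ext n
  rw [coeff_psubst, sum_eq_single 0 (fun k _ hk => by simp [coeff_one, hk]) (by simp)]
  simp

theorem psubst_X {g : ℚ⟦X⟧} (hg : constantCoeff g = 0) : psubst g X = g := by
  ext n
  rcases n with _ | n
  · simp [coeff_psubst, hg]
  · rw [coeff_psubst, sum_eq_single 1 (fun k _ hk => by simp [coeff_X, hk]) (by simp)]
    simp

theorem coeff_pow_self {g : ℚ⟦X⟧} (hg : constantCoeff g = 0) (n : ℕ) :
    coeff n (g ^ n) = coeff 1 g ^ n := by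
  obtain ⟨u, rfl⟩ := X_dvd_iff.mpr hg
  rw [mul_pow, coeff_X_pow_mul', if_pos le_rfl, Nat.sub_self, coeff_zero_eq_constantCoeff,
    map_pow, ← coeff_zero_eq_constantCoeff_apply, coeff_succ_X_mul]

theorem psubst_injective {g : ℚ⟦X⟧} (hg₀ : constantCoeff g = 0) (hg₁ : coeff 1 g ≠ 0) :
    Function.Injective (psubst g) := by
  intro f₁ f₂ h
  rw [← sub_eq_zero, ← psubst_sub] at h
  ext n
  rw [← sub_eq_zero, ← map_sub]
  induction n using Nat.strong_induction_on with
  | _ n ih =>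
    have hn := congrArg (coeff n) h
    rw [coeff_psubst, map_zero, sum_range_succ, sum_eq_zero fun k hk => by
      rw [ih k (mem_range.mp hk), zero_mul], zero_add, coeff_pow_self hg₀] at hn
    exact (mul_eq_zero.mp hn).resolve_right (pow_ne_zero _ hg₁)

theorem coeff_X_mul_exp_pow {n k : ℕ} (h : k ≤ n) :
    coeff n ((X * exp ℚ) ^ k) = (k : ℚ) ^ (n - k) / (n - k).factorial := by
  rw [mul_pow, exp_pow_eq_rescale_exp, ← Nat.sub_add_cancel h, coeff_X_pow_mul, coeff_rescale,
    coeff_exp, Nat.add_sub_cancel]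
  simp [div_eq_mul_inv]

noncomputable def expLambertW : ℚ⟦X⟧ :=
  mk fun k => (1 - k : ℚ) ^ (k - 1) / k.factorial

theorem psubst_X_mul_exp_expLambertW : psubst (X * exp ℚ) expLambertW = exp ℚ := by
  ext n
  rw [coeff_psubst, coeff_exp, Algebra.algebraMap_self, RingHom.id_apply,
    ← sum_choose_mul_one_sub_pow_mul_pow n, sum_div]
  refine sum_congr rfl fun k hk => ?_
  have hkn : k ≤ n := Nat.lt_succ_iff.mp (mem_range.mp hk)
  rw [expLambertW, coeff_mk, coeff_X_mul_exp_pow hkn, Nat.cast_choose ℚ hkn]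
  field_simp

theorem coeff_sub_X_mul_derivative (f : ℚ⟦X⟧) (n : ℕ) :
    coeff n (f - X * d⁄dX ℚ f) = (1 - n) * coeff n f := by
  rcases n with _ | n
  · simp
  · rw [map_sub, coeff_succ_X_mul, coeff_derivative]
    push_cast
    ring

theorem coeff_of_functional_equation_general (f : PowerSeries ℚ)
    (heq : psubst (PowerSeries.X * PowerSeries.exp ℚ)
        (f - PowerSeries.X * PowerSeries.derivativeFun f)
      = PowerSeries.exp ℚ - PowerSeries.X * PowerSeries.exp ℚ - 1) :
    ∀ n : ℕ, 2 ≤ n →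
      PowerSeries.coeff n f = (-1) ^ n * ((n : ℚ) - 1) ^ (n - 2) / n.factorial := by
  have hsol : psubst (X * exp ℚ) (expLambertW - 1 - X) = exp ℚ - X * exp ℚ - 1 := by
    rw [psubst_sub, psubst_sub, psubst_one, psubst_X (by simp), psubst_X_mul_exp_expLambertW]
    ring
  have hg : f - X * d⁄dX ℚ f = expLambertW - 1 - X :=
    psubst_injective (by simp) (by simp [coeff_succ_X_mul]) (heq.trans hsol.symm)
  intro n hn
  obtain ⟨m, rfl⟩ := Nat.exists_eq_add_of_le' hn
  have hcoeff := congrArg (coeff (m + 2)) hg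
  rw [coeff_sub_X_mul_derivative, map_sub, map_sub, expLambertW, coeff_mk, coeff_one, coeff_X,
    if_neg (by omega), if_neg (by omega), sub_zero, sub_zero] at hcoeff
  have hpow : (1 - (m + 2 : ℕ) : ℚ) ^ (m + 2 - 1) =
      (1 - (m + 2 : ℕ)) * ((-1) ^ (m + 2) * ((m + 2 : ℕ) - 1 : ℚ) ^ (m + 2 - 2)) := by
    rw [show m + 2 - 1 = m + 1 by omega, Nat.add_sub_cancel, pow_succ', pow_add,
      neg_one_sq, mul_one, ← mul_pow, neg_one_mul, neg_sub]
  rw [hpow, mul_div_assoc] at hcoeff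
  rw [mul_left_cancel₀ (by push_cast; linarith) hcoeff, mul_div_assoc]

theorem coeff_of_functional_equation (f : PowerSeries ℚ)
    (hf : PowerSeries.constantCoeff f = 0)
    (heq : psubst (PowerSeries.X * PowerSeries.exp ℚ)
        (f - PowerSeries.X * PowerSeries.derivativeFun f)
      = PowerSeries.exp ℚ - PowerSeries.X * PowerSeries.exp ℚ - 1) :
    ∀ n : ℕ, 2 ≤ n →
      PowerSeries.coeff n f = (-1) ^ n * ((n : ℚ) - 1) ^ (n - 2) / n.factorial :=
  coeff_of_functional_equation_general f heq
end

section
/- Let ΣW = Σ_{n≥1} (−1)^{n−1} n^{n−1} x^n/n! ∈ ℚ[[x]]. Then exp(ΣW) − x − 1 = Σ_{n≥2} (−1)^{n−1} (n−1)^{n−1} x^n/n!; that is, exp(ΣW) has constant coefficient 1, coefficient of x equal to 1, and for every n ≥ 2 its coefficient of x^n equals (−1)^{n−1} (n−1)^{n−1}/n!. -/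
/-- `ΣW = Σ_{n≥1} (-1)^(n-1) n^(n-1) xⁿ/n!`. -/
noncomputable def SW : PowerSeries ℚ :=
  PowerSeries.mk fun n =>
    if n = 0 then 0 else (-1) ^ (n - 1) * (n : ℚ) ^ (n - 1) / n.factorial

open Finset
open scoped Nat

section Abel

open Polynomial

variable {R : Type*} [CommRing R]

theorem sum_antidiagonal_neg_one_pow_mul_choose_mul_pow_eq_zero (x : R) {m n : ℕ} (h : m < n) :
    ∑ p ∈ antidiagonal n, (-1) ^ p.2 * (n.choose p.2 : R) * (x + p.1) ^ m = 0 := by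
  have h0 : (fwdDiff 1)^[n] (fun r : R => r ^ m) x = 0 := by
    rw [fwdDiff_iter_pow_eq_zero_of_lt h, Pi.zero_apply]
  rw [fwdDiff_iter_eq_sum_shift] at h0
  rw [Nat.sum_antidiagonal_eq_sum_range_succ (fun i j => (-1) ^ j * (n.choose j : R) * (x + i) ^ m),
    ← h0]
  refine sum_congr rfl fun k hk => ?_
  rw [Nat.choose_symm (by simpa [Nat.lt_succ_iff] using hk)]
  simp [zsmul_eq_mul]

/-- `x (x + k)^(k-1)`, with the value `1` at `k = 0` that this formula has for `x ≠ 0`. -/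
def abelTerm (x : R) (k : ℕ) : R := if k = 0 then 1 else x * (x + k) ^ (k - 1)

theorem abelTerm_mul_neg_pow (x : R) {i j : ℕ} (h : i + j ≠ 0) :
    abelTerm x i * (-(x + i)) ^ j = (-1) ^ j * x * (x + i) ^ (i + j - 1) := by
  rcases Nat.eq_zero_or_pos i with rfl | hi
  · obtain ⟨j, rfl⟩ := Nat.exists_eq_add_one_of_ne_zero (by simpa using h)
    simp only [abelTerm, if_pos, Nat.cast_zero, add_zero, one_mul, zero_add, Nat.add_sub_cancel]
    rw [neg_pow, pow_succ']
    ring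
  · rw [abelTerm, if_neg hi.ne', neg_pow, show i + j - 1 = (i - 1) + j by omega, pow_add]
    ring

noncomputable def abelSum (x : R) (n : ℕ) : R[X] :=
  ∑ p ∈ antidiagonal n, C ((n.choose p.2 : R) * abelTerm x p.1) * (X + C (p.2 : R)) ^ p.2

theorem derivative_abelSum (x : R) (n : ℕ) :
    derivative (abelSum x (n + 1)) = C ((n + 1 : ℕ) : R) * (abelSum x n).comp (X + 1) := by
  have hterm : ∀ p ∈ antidiagonal n,
      derivative (C (((n + 1).choose (p.2 + 1) : R) * abelTerm x p.1)
        * (X + C ((p.2 + 1 : ℕ) : R)) ^ (p.2 + 1))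
      = C ((n + 1 : ℕ) : R) * (C ((n.choose p.2 : R) * abelTerm x p.1)
        * (X + 1 + C (p.2 : R)) ^ p.2) := by
    rintro ⟨i, j⟩ -
    have hc : C ((n + 1).choose (j + 1) : R) * C ((j + 1 : ℕ) : R)
        = C ((n + 1 : ℕ) : R) * C (n.choose j : R) := by
      simp only [← map_mul, ← Nat.cast_mul, Nat.add_one_mul_choose_eq]
    have hshift : X + C ((j + 1 : ℕ) : R) = X + 1 + C (j : R) := by
      push_cast; rw [C_add, C_1]; ring
    rw [derivative_C_mul, derivative_X_add_C_pow, Nat.add_sub_cancel, hshift]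
    simp only [map_mul]
    linear_combination (C (abelTerm x i) * (X + 1 + C (j : R)) ^ j) * hc
  rw [abelSum, derivative_sum, Nat.sum_antidiagonal_succ', sum_congr rfl hterm, ← mul_sum,
    abelSum]
  simp [Polynomial.sum_comp]

theorem eval_abelSum_neg (x : R) (n : ℕ) :
    (abelSum x (n + 1)).eval (-(x + (n + 1 : ℕ))) = 0 := by
  have hterm : ∀ p ∈ antidiagonal (n + 1),
      eval (-(x + (n + 1 : ℕ))) (C (((n + 1).choose p.2 : R) * abelTerm x p.1)
        * (X + C (p.2 : R)) ^ p.2)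
      = x * ((-1) ^ p.2 * ((n + 1).choose p.2 : R) * (x + p.1) ^ n) := by
    rintro ⟨i, j⟩ hij
    rw [HasAntidiagonal.mem_antidiagonal] at hij
    have hbase : -(x + ((n + 1 : ℕ) : R)) + j = -(x + i) := by
      rw [← hij]; push_cast; ring
    simp only [eval_mul, eval_C, eval_pow, eval_add, eval_X, hbase]
    rw [mul_assoc, abelTerm_mul_neg_pow x (by omega), show i + j - 1 = n by omega]
    ring
  rw [abelSum, eval_finsetSum, sum_congr rfl hterm, ← mul_sum,
    sum_antidiagonal_neg_one_pow_mul_choose_mul_pow_eq_zero x n.lt_succ_self, mul_zero]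

variable [IsAddTorsionFree R]

theorem abelSum_eq (x : R) (n : ℕ) : abelSum x n = (X + C (x + n)) ^ n := by
  induction n with
  | zero => simp [abelSum, abelTerm]
  | succ n ih =>
    rw [← sub_eq_zero]
    set P := abelSum x (n + 1) - (X + C (x + (n + 1 : ℕ))) ^ (n + 1)
    have hshift : X + C (x + ((n + 1 : ℕ) : R)) = (X + C (x + n)).comp (X + 1) := by
      rw [Nat.cast_succ]; simp only [add_comp, X_comp, C_comp, map_add, map_one]; ring
    have hder : derivative P = 0 := by
      rw [derivative_sub, derivative_abelSum, ih, derivative_X_add_C_pow, hshift, ← pow_comp,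
        Nat.add_sub_cancel, sub_self]
    have heval : P.eval (-(x + (n + 1 : ℕ))) = 0 := by
      rw [eval_sub, eval_abelSum_neg, eval_pow, eval_add, eval_X, eval_C, neg_add_cancel,
        zero_pow n.succ_ne_zero, sub_zero]
    have hconst := eq_C_of_derivative_eq_zero hder
    rw [hconst, eval_C] at heval
    rw [hconst, heval, C_0]

theorem abel_identity (x y : R) (n : ℕ) :
    ∑ p ∈ antidiagonal n, (n.choose p.2 : R) * abelTerm x p.1 * (y + p.2) ^ p.2
      = (x + y + n) ^ n := by
  have := congrArg (eval y) (abelSum_eq x n)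
  simp only [abelSum, eval_finsetSum, eval_mul, eval_C, eval_pow, eval_add, eval_X] at this
  rw [this]
  ring

end Abel

open PowerSeries

theorem PowerSeries.coeff_pow_eq_zero_of_lt {R : Type*} [CommSemiring R] {g : R⟦X⟧}
    (hg : constantCoeff g = 0) {n k : ℕ} (h : n < k) : coeff n (g ^ k) = 0 :=
  X_pow_dvd_iff.mp (pow_dvd_pow_of_dvd (X_dvd_iff.mpr hg) k) n h

theorem psubst_eq_subst {g : ℚ⟦X⟧} (hg : constantCoeff g = 0) (f : ℚ⟦X⟧) :
    psubst g f = f.subst g := by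
  ext n
  rw [psubst, coeff_mk, coeff_subst' (HasSubst.of_constantCoeff_zero' hg),
    finsum_eq_sum_of_support_subset (s := range (n + 1))]
  · simp only [smul_eq_mul]
  · intro k hk
    by_contra hkn
    exact hk (by dsimp only; rw [coeff_pow_eq_zero_of_lt hg (by simpa using hkn), smul_zero])

theorem derivative_psubst_exp {g : ℚ⟦X⟧} (hg : constantCoeff g = 0) :
    d⁄dX ℚ (psubst g (exp ℚ)) = psubst g (exp ℚ) * d⁄dX ℚ g := by
  rw [psubst_eq_subst hg, derivative_subst (HasSubst.of_constantCoeff_zero' hg), derivative_exp]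

theorem PowerSeries.eq_of_derivative_eq_mul {R : Type*} [CommRing R] [IsAddTorsionFree R]
    {f g h : R⟦X⟧} (hf : d⁄dX R f = f * h) (hg : d⁄dX R g = g * h)
    (h0 : constantCoeff f = constantCoeff g) : f = g := by
  ext n
  induction n using Nat.strong_induction_on with
  | _ n ih =>
    rcases n with _ | n
    · simpa using h0
    have hmul : coeff n (f * h) = coeff n (g * h) := by
      simp only [coeff_mul]
      refine sum_congr rfl fun p hp => ?_
      rw [ih p.1 (Nat.antidiagonal.fst_lt hp)]
    have hcoeff : coeff (n + 1) f * (n + 1) = coeff (n + 1) g * (n + 1) := by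
      rw [← coeff_derivative, ← coeff_derivative, hf, hg, hmul]
    exact (smul_right_inj n.succ_ne_zero).mp (by simpa [nsmul_eq_mul, mul_comm] using hcoeff)

theorem constantCoeff_SW : constantCoeff SW = 0 := by
  simp [SW, ← coeff_zero_eq_constantCoeff_apply]

theorem coeff_derivative_SW (j : ℕ) :
    coeff j (d⁄dX ℚ SW) = (-1) ^ j * ((j : ℚ) + 1) ^ j / j ! := by
  rw [coeff_derivative, SW, coeff_mk, if_neg j.succ_ne_zero, Nat.add_sub_cancel,
    Nat.factorial_succ]
  push_cast
  field_simp

noncomputable def expSWClosed : ℚ⟦X⟧ :=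
  mk fun n => (-1) ^ (n - 1) * ((n : ℚ) - 1) ^ (n - 1) / n !

theorem neg_one_pow_mul_abelTerm_neg_one (n : ℕ) :
    (-1) ^ n * abelTerm (-1 : ℚ) n = (-1) ^ (n - 1) * ((n : ℚ) - 1) ^ (n - 1) := by
  rcases n with _ | n
  · simp [abelTerm]
  · simp only [abelTerm, n.succ_ne_zero, if_false, Nat.add_sub_cancel, pow_succ]
    push_cast
    ring

theorem derivative_expSWClosed : d⁄dX ℚ expSWClosed = expSWClosed * d⁄dX ℚ SW := by
  ext n
  have hterm : ∀ p ∈ antidiagonal n, coeff p.1 expSWClosed * coeff p.2 (d⁄dX ℚ SW)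
      = (-1) ^ n / n ! * ((n.choose p.2 : ℚ) * abelTerm (-1) p.1 * (1 + p.2) ^ p.2) := by
    rintro ⟨i, j⟩ hij
    rw [HasAntidiagonal.mem_antidiagonal] at hij
    subst hij
    have hchoose : ((i + j).choose j : ℚ) ≠ 0 := by
      exact_mod_cast (Nat.choose_pos (Nat.le_add_left j i)).ne'
    rw [expSWClosed, coeff_mk, ← neg_one_pow_mul_abelTerm_neg_one, coeff_derivative_SW,
      ← Nat.add_choose_mul_factorial_mul_factorial]
    push_cast
    field_simp
    ring
  rw [coeff_mul, sum_congr rfl hterm, ← mul_sum, abel_identity, coeff_derivative, expSWClosed,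
    coeff_mk, Nat.add_sub_cancel, Nat.factorial_succ]
  push_cast
  field_simp
  ring

theorem psubst_SW_exp : psubst SW (exp ℚ) = expSWClosed := by
  refine eq_of_derivative_eq_mul (derivative_psubst_exp constantCoeff_SW)
    derivative_expSWClosed ?_
  rw [← coeff_zero_eq_constantCoeff_apply, ← coeff_zero_eq_constantCoeff_apply]
  simp [psubst, expSWClosed]

theorem exp_SW_sub :
    psubst SW (PowerSeries.exp ℚ) - PowerSeries.X - 1
      = PowerSeries.mk (fun n =>
          if n < 2 then 0 else (-1) ^ (n - 1) * ((n : ℚ) - 1) ^ (n - 1) / n.factorial) ∧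
    PowerSeries.constantCoeff (psubst SW (PowerSeries.exp ℚ)) = 1 ∧
    PowerSeries.coeff 1 (psubst SW (PowerSeries.exp ℚ)) = 1 ∧
    ∀ n : ℕ, 2 ≤ n →
      PowerSeries.coeff n (psubst SW (PowerSeries.exp ℚ))
        = (-1) ^ (n - 1) * ((n : ℚ) - 1) ^ (n - 1) / n.factorial := by
  have hcoeff (n : ℕ) : coeff n (psubst SW (exp ℚ))
      = (-1) ^ (n - 1) * ((n : ℚ) - 1) ^ (n - 1) / n ! := by
    rw [psubst_SW_exp, expSWClosed, coeff_mk]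
  refine ⟨?_, by simpa using hcoeff 0, by simpa using hcoeff 1, fun n _ => hcoeff n⟩
  ext n
  rw [map_sub, map_sub, hcoeff, coeff_mk, coeff_X, coeff_one]
  rcases n with _ | _ | n <;> simp
end

section
/- (Dissymmetry principle for hypertrees, counting form.) For every n ≥ 1, h(n) + Σ_{H ∈ HT_n} Σ_{e ∈ E(H)} |e| = n·h(n) + Σ_{H ∈ HT_n} |E(H)|, where h(n) is the number of hypertrees on {1,…,n}, E(H) is the edge set of H, and |e| is the cardinality of the edge e. In other words, the number of hypertrees plus the number of edge-pointed rooted hypertrees (a hypertree with a distinguished edge and a distinguished vertex of that edge) equals the number of rooted hypertrees (a hypertree with a distinguished vertex) plus the number of edge-pointed hypertrees (a hypertree with a distinguished edge). -/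
/-!
Hypertrees on `{1, …, n}` (vertices modelled by `Fin n`), identified with their edge
sets.

STATEMENT (dissymmetry principle, counting form): for every `n ≥ 1`,
`h(n) + Σ_{H} Σ_{e ∈ E(H)} |e| = n·h(n) + Σ_{H} |E(H)|`, i.e. the number of
hypertrees plus the number of edge-pointed rooted hypertrees equals the number of
rooted hypertrees plus the number of edge-pointed hypertrees.
-/

/-- `(V, E)` is a hypergraph: edges are subsets of `V` of cardinality at least `2`. -/
def IsHypergraph {α : Type*} (V : Finset α) (E : Finset (Finset α)) : Prop :=
  (∀ e ∈ E, e ⊆ V) ∧ (∀ e ∈ E, 2 ≤ e.card)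

/-- Incidence between successive entries of a walk. -/
def HAdj {α : Type*} : α ⊕ Finset α → α ⊕ Finset α → Prop
  | Sum.inl v, Sum.inr e => v ∈ e
  | Sum.inr e, Sum.inl v => v ∈ e
  | _, _ => False

/-- `L` is a walk from `d` to `f` in the hypergraph `(V, E)`. -/
def IsWalk {α : Type*} (V : Finset α) (E : Finset (Finset α))
    (L : List (α ⊕ Finset α)) (d f : α ⊕ Finset α) : Prop :=
  L ≠ [] ∧ L.head? = some d ∧ L.getLast? = some f ∧ L.Chain' HAdj ∧
    (∀ v : α, Sum.inl v ∈ L → v ∈ V) ∧ (∀ e : Finset α, Sum.inr e ∈ L → e ∈ E)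

/-- The list of edges occurring in a walk. -/
def walkEdges {α : Type*} (L : List (α ⊕ Finset α)) : List (Finset α) :=
  L.filterMap Sum.getRight?

/-- `(V, E)` is a hypertree. -/
def IsHypertree {α : Type*} (V : Finset α) (E : Finset (Finset α)) : Prop :=
  IsHypergraph V E ∧ V.Nonempty ∧
    ∀ v ∈ V, ∀ w ∈ V,
      ∃! L : List (α ⊕ Finset α),
        IsWalk V E L (Sum.inl v) (Sum.inl w) ∧ (walkEdges L).Nodup

/-- The hypertrees on `{1, …, n}`, identified with their edge sets. -/
def HT (n : ℕ) : Type :=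
  {E : Finset (Finset (Fin n)) // IsHypertree Finset.univ E}

noncomputable instance (n : ℕ) : Fintype (HT n) := by unfold HT; exact Fintype.ofFinite _

/-!
A hypergraph `(V, E)` is a hypertree exactly when its bipartite incidence graph on `V ⊕ E` is a
tree: walks of the hypergraph are walks of the incidence graph, and "pairwise distinct edges"
along a closed walk at a vertex rules out cycles. That tree has `|V| + |E|` nodes and
`Σ_{e ∈ E} |e|` edges, so `Σ_{e ∈ E} |e| + 1 = |V| + |E|` for every hypertree; summing this over
`HT_n` gives the dissymmetry identity.
-/

open SimpleGraph Finset

section IncidenceGraph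

variable {α : Type*} {V : Finset α} {E : Finset (Finset α)}

def toWalkEntry (V : Finset α) (E : Finset (Finset α)) : V ⊕ E → α ⊕ Finset α :=
  Sum.map (↑) (↑)

lemma toWalkEntry_injective : Function.Injective (toWalkEntry V E) :=
  Subtype.val_injective.sumMap Subtype.val_injective

/-- The bipartite graph whose nodes are the vertices and the edges of `(V, E)`, a vertex being
adjacent to the edges containing it. -/
def incidenceGraph (V : Finset α) (E : Finset (Finset α)) : SimpleGraph (V ⊕ E) where
  Adj a b := HAdj (toWalkEntry V E a) (toWalkEntry V E b)
  symm := ⟨by rintro (v | e) (w | f) h <;> exact h⟩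
  loopless := ⟨by rintro (v | e) h <;> exact h⟩

@[simp]
lemma incidenceGraph_adj_inr_inl {v : V} {e : E} :
    (incidenceGraph V E).Adj (.inr e) (.inl v) ↔ v.1 ∈ e.1 := .rfl

@[simp]
lemma not_incidenceGraph_adj_inl_inl {v w : V} : ¬(incidenceGraph V E).Adj (.inl v) (.inl w) := id

@[simp]
lemma not_incidenceGraph_adj_inr_inr {e f : E} : ¬(incidenceGraph V E).Adj (.inr e) (.inr f) := id

instance [DecidableEq α] : DecidableRel (incidenceGraph V E).Adj
  | .inl _, .inl _ => isFalse id
  | .inl v, .inr e => inferInstanceAs (Decidable (v.1 ∈ e.1))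
  | .inr e, .inl v => inferInstanceAs (Decidable (v.1 ∈ e.1))
  | .inr _, .inr _ => isFalse id

lemma IsWalk.exists_toWalkEntry_eq {L : List (α ⊕ Finset α)} {d f : α ⊕ Finset α}
    (hL : IsWalk V E L d f) {x : α ⊕ Finset α} (hx : x ∈ L) : ∃ a, toWalkEntry V E a = x := by
  rcases x with v | e
  · exact ⟨.inl ⟨v, hL.2.2.2.2.1 v hx⟩, rfl⟩
  · exact ⟨.inr ⟨e, hL.2.2.2.2.2 e hx⟩, rfl⟩

lemma IsWalk.of_cons {x y : α ⊕ Finset α} {L : List (α ⊕ Finset α)} {d f : α ⊕ Finset α}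
    (hL : IsWalk V E (x :: y :: L) d f) : IsWalk V E (y :: L) y f := by
  obtain ⟨-, -, hlast, hchain, hV, hE⟩ := hL
  exact ⟨List.cons_ne_nil _ _, rfl, by simpa using hlast, hchain.tail,
    fun v hv => hV v (List.mem_cons_of_mem _ hv), fun e he => hE e (List.mem_cons_of_mem _ he)⟩

lemma reachable_of_isWalk {L : List (α ⊕ Finset α)} {a b : V ⊕ E}
    (hL : IsWalk V E L (toWalkEntry V E a) (toWalkEntry V E b)) :
    (incidenceGraph V E).Reachable a b := by
  induction L generalizing a with
  | nil => exact absurd rfl hL.1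
  | cons x L ih =>
    obtain rfl : x = toWalkEntry V E a := by simpa using hL.2.1
    cases L with
    | nil =>
      obtain rfl := toWalkEntry_injective (V := V) (E := E) (by simpa using hL.2.2.1)
      rfl
    | cons y L =>
      obtain ⟨a', rfl⟩ := hL.exists_toWalkEntry_eq (x := y) (by simp)
      have hadj : (incidenceGraph V E).Adj a a' := (List.isChain_cons_cons.mp hL.2.2.2.1).1
      exact hadj.reachable.trans (ih hL.of_cons)

lemma isWalk_map_support {a b : V ⊕ E} (p : (incidenceGraph V E).Walk a b) :
    IsWalk V E (p.support.map (toWalkEntry V E)) (toWalkEntry V E a) (toWalkEntry V E b) := by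
  refine ⟨by simp, by cases p <;> rfl, ?_, ?_, ?_, ?_⟩
  · rw [List.getLast?_map, List.getLast?_eq_some_getLast p.support_ne_nil, p.getLast_support]; rfl
  · exact List.isChain_map_of_isChain (toWalkEntry V E) (fun _ _ h => h) p.isChain_adj_support
  · simp only [List.mem_map]
    rintro v ⟨(w | e), -, h⟩ <;> cases h
    exact w.2
  · simp only [List.mem_map]
    rintro e ⟨(w | f), -, h⟩ <;> cases h
    exact f.2

lemma walkEdges_map_toWalkEntry (l : List (V ⊕ E)) :
    walkEdges (l.map (toWalkEntry V E)) = (l.filterMap Sum.getRight?).map (↑) := by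
  rw [walkEdges, List.filterMap_map, List.map_filterMap]
  congr 1
  funext x
  rcases x with v | e <;> rfl

lemma nodup_walkEdges_map_toWalkEntry {l : List (V ⊕ E)} (hl : l.Nodup) :
    (walkEdges (l.map (toWalkEntry V E))).Nodup := by
  rw [walkEdges_map_toWalkEntry]
  refine (hl.filterMap ?_).map Subtype.val_injective
  rintro (v | e) (w | f) g <;> simp_all

lemma exists_inl_mem_support {a b : V ⊕ E} (p : (incidenceGraph V E).Walk a b) (hp : ¬p.Nil) :
    ∃ v, Sum.inl v ∈ p.support := by
  cases p with
  | nil => exact absurd .nil hp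
  | @cons _ c _ h q =>
    rcases a with v | e
    · exact ⟨v, Walk.start_mem_support _⟩
    · rcases c with w | f
      · exact ⟨w, by simp⟩
      · exact h.elim

lemma isWalk_singleton {v : α} (hv : v ∈ V) : IsWalk V E [Sum.inl v] (Sum.inl v) (Sum.inl v) :=
  ⟨List.cons_ne_nil _ _, rfl, rfl, List.isChain_singleton _, by simpa using hv, by simp⟩

/-- A cycle of the incidence graph, read from one of its vertices, is a walk with pairwise
distinct edges, hence must be the trivial walk by uniqueness. -/
lemma IsHypertree.isAcyclic (hT : IsHypertree V E) : (incidenceGraph V E).IsAcyclic := by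
  classical
  intro a c hc
  obtain ⟨v, hv⟩ := exists_inl_mem_support c hc.not_nil
  set c' := c.rotate (Sum.inl v) hv
  have hc' : c'.IsCycle := hc.rotate hv
  have hnodup : (walkEdges (c'.support.map (toWalkEntry V E))).Nodup := by
    rw [← c'.cons_tail_support, List.map_cons, walkEdges, List.filterMap_cons_none rfl]
    exact nodup_walkEdges_map_toWalkEntry hc'.support_nodup
  have htrivial := (hT.2.2 v v.2 v v.2).unique ⟨isWalk_map_support c', hnodup⟩
    ⟨isWalk_singleton v.2, List.nodup_nil⟩
  have hlen : c'.length = 0 := by simpa using congrArg List.length htrivial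
  exact hc'.not_nil (Walk.length_eq_zero_iff.mp hlen)

lemma IsHypergraph.exists_adj_inr (hH : IsHypergraph V E) (e : E) :
    ∃ v, (incidenceGraph V E).Adj (.inr e) (.inl v) := by
  obtain ⟨v, hv⟩ := Finset.card_pos.mp (two_pos.trans_le (hH.2 e e.2))
  exact ⟨⟨v, hH.1 e e.2 hv⟩, hv⟩

lemma IsHypertree.connected (hT : IsHypertree V E) : (incidenceGraph V E).Connected := by
  obtain ⟨v₀, hv₀⟩ := hT.2.1
  have hvertex (w : V) : (incidenceGraph V E).Reachable (.inl ⟨v₀, hv₀⟩) (.inl w) := by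
    obtain ⟨L, ⟨hL, -⟩, -⟩ := hT.2.2 v₀ hv₀ w w.2
    exact reachable_of_isWalk hL
  have hreach : ∀ a, (incidenceGraph V E).Reachable (.inl ⟨v₀, hv₀⟩) a := by
    rintro (w | e)
    · exact hvertex w
    · obtain ⟨w, hw⟩ := hT.1.exists_adj_inr e
      exact (hvertex w).trans hw.symm.reachable
  have : Nonempty (V ⊕ E) := ⟨.inl ⟨v₀, hv₀⟩⟩
  exact .mk fun a b => (hreach a).symm.trans (hreach b)

lemma IsHypertree.isTree (hT : IsHypertree V E) : (incidenceGraph V E).IsTree :=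
  ⟨hT.connected, hT.isAcyclic⟩

lemma isBipartiteWith_incidenceGraph :
    (incidenceGraph V E).IsBipartiteWith
      (univ.map .inl : Finset (V ⊕ E)) (univ.map .inr : Finset (V ⊕ E)) where
  disjoint := Finset.disjoint_coe.mpr (disjoint_map_inl_map_inr _ _)
  mem_of_adj := by rintro (v | e) (w | f) h <;> simp_all

variable [DecidableEq α]

lemma incidenceGraph_degree_inr (hE : ∀ e ∈ E, e ⊆ V) (e : E) :
    (incidenceGraph V E).degree (.inr e) = e.1.card := by
  have : (incidenceGraph V E).neighborFinset (.inr e) = (e.1.subtype (· ∈ V)).map .inl := by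
    ext (v | f) <;> simp
  rw [← card_neighborFinset_eq_degree, this, card_map, card_subtype,
    filter_true_of_mem (hE e e.2)]

lemma card_edgeFinset_incidenceGraph (hE : ∀ e ∈ E, e ⊆ V) :
    #(incidenceGraph V E).edgeFinset = ∑ e ∈ E, e.card := by
  rw [← isBipartiteWith_sum_degrees_eq_card_edges' isBipartiteWith_incidenceGraph, sum_map,
    ← sum_coe_sort E card]
  exact sum_congr rfl fun e _ => incidenceGraph_degree_inr hE e

lemma IsHypertree.sum_card_add_one (hT : IsHypertree V E) :
    ∑ e ∈ E, e.card + 1 = #V + #E := by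
  rw [← card_edgeFinset_incidenceGraph hT.1.1, hT.isTree.card_edgeFinset, Fintype.card_sum,
    Fintype.card_coe, Fintype.card_coe]

end IncidenceGraph

theorem hypertree_dissymmetry_general (n : ℕ) :
    Fintype.card (HT n) + ∑ H : HT n, ∑ e ∈ H.val, e.card
      = n * Fintype.card (HT n) + ∑ H : HT n, H.val.card := by
  have hcount (H : HT n) : ∑ e ∈ H.val, e.card + 1 = n + H.val.card := by
    simpa using H.2.sum_card_add_one
  have := Finset.sum_congr rfl fun H (_ : H ∈ univ) => hcount H
  simp only [sum_add_distrib, sum_const, card_univ, smul_eq_mul, mul_one] at this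
  lia

/-- Dissymmetry principle for hypertrees: hypertrees plus edge-pointed rooted
hypertrees are equinumerous with rooted hypertrees plus edge-pointed hypertrees. -/
theorem hypertree_dissymmetry (n : ℕ) (hn : 1 ≤ n) :
    Fintype.card (HT n) + ∑ H : HT n, ∑ e ∈ H.val, e.card
      = n * Fintype.card (HT n) + ∑ H : HT n, H.val.card :=
  hypertree_dissymmetry_general n
end
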